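/- The function h_A(sin x) ∏_{i=1}^k cos(x_i), where h_A is the Vandermonde determinant and sin is applied componentwise, is harmonic for the operator ½Δ + λ^{(A)} on W_A ∩ (−π/2,π/2)^k: that is, −½Δ [h_A(sin x) ∏_i cos x_i] = (½ Σ_{i=1}^k i²) · h_A(sin x) ∏_i cos x_i for all x in the open set. -/

import Mathlib

/-!
Substituting `θ = π/2 - t` in `U_m(cos θ) sin θ = sin((m+1)θ)` gives
`U_m(sin t) cos t = sin((m+1)(π/2 - t))`. Since `U_m` has degree `m` and leading
coefficient `2^m`, `h_A(sin x) ∏ cos x_i` is `2^{-Σ m}` times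
`det [sin((m+1)(π/2 - x_a))]_{a,m}`. Each entry of column `m` is an eigenfunction of `d²/dt²`
with eigenvalue `-(m+1)²`, and the Laplacian of a determinant of one-variable eigenfunctions is
the sum of their eigenvalues times the determinant.
-/

open Finset Real

/-- The Laplacian of `f : ℝ^k → ℝ`, as the sum of second derivatives of the
one-dimensional coordinate slices. -/
noncomputable def lap {k : ℕ} (f : (Fin k → ℝ) → ℝ) (x : Fin k → ℝ) : ℝ :=
  ∑ i : Fin k, deriv (deriv (fun t => f (Function.update x i t))) (x i)

open Matrix Polynomial Polynomial.Chebyshev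

theorem lap_const_mul {k : ℕ} (c : ℝ) (f : (Fin k → ℝ) → ℝ) (x : Fin k → ℝ) :
    lap (fun y => c * f y) x = c * lap f x := by
  simp only [lap, deriv_const_mul_field', mul_sum]

theorem Matrix.det_updateRow_eq_sum_mul_adjugate {n R : Type*} [Fintype n] [DecidableEq n]
    [CommRing R] (A : Matrix n n R) (i : n) (r : n → R) :
    (A.updateRow i r).det = ∑ j, r j * adjugate A j i := by
  rw [det_eq_sum_mul_adjugate_row _ i]
  simp only [updateRow_self, adjugate_apply, updateRow_idem]

theorem Matrix.det_eval_eq_det_vandermonde_mul_prod_leadingCoeff {R : Type*} [CommRing R]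
    {n : ℕ} (v : Fin n → R) (p : Fin n → R[X]) (h_deg : ∀ i, (p i).natDegree = i) :
    (of fun i j => (p j).eval (v i)).det = (vandermonde v).det * ∏ j, (p j).leadingCoeff := by
  rw [eval_matrixOfPolynomials_eq_vandermonde_mul_matrixOfPolynomials v p (fun i ↦ (h_deg i).le),
    det_mul,
    det_of_isUpperTriangular (matrixOfPolynomials_blockTriangular p fun i ↦ (h_deg i).le)]
  congr 1
  refine prod_congr rfl fun j _ => ?_
  rw [of_apply, ← h_deg, coeff_natDegree]

/-- The slice in `y i` is `∑ m, f m t * adjugate A m i`, so after differentiating twice, summing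
over `i` gives the column expansions of the determinant. -/
theorem lap_det_of_hasDerivAt {k : ℕ} (f f' : Fin k → ℝ → ℝ) (μ : Fin k → ℝ)
    (hf : ∀ m t, HasDerivAt (f m) (f' m t) t) (hf' : ∀ m t, HasDerivAt (f' m) (-μ m * f m t) t)
    (x : Fin k → ℝ) :
    lap (fun y => (of fun a m => f m (y a)).det) x
      = -(∑ m, μ m) * (of fun a m => f m (x a)).det := by
  set A : Matrix (Fin k) (Fin k) ℝ := of fun a m => f m (x a)
  have slice : ∀ i t, (of fun a m => f m (Function.update x i t a)).det
      = ∑ m, f m t * adjugate A m i := by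
    intro i t
    rw [← det_updateRow_eq_sum_mul_adjugate]
    congr 1
    ext a m
    rcases eq_or_ne a i with rfl | h
    · simp
    · simp [h, A]
  have second : ∀ i, deriv (deriv fun t => ∑ m, f m t * adjugate A m i) (x i)
      = ∑ m, (-μ m * A i m) * adjugate A m i := by
    intro i
    have first : deriv (fun t => ∑ m, f m t * adjugate A m i)
        = fun t => ∑ m, f' m t * adjugate A m i :=
      funext fun t => (HasDerivAt.fun_sum fun m _ => (hf m t).mul_const _).deriv
    rw [first]
    exact (HasDerivAt.fun_sum fun m _ => (hf' m (x i)).mul_const _).deriv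
  calc lap (fun y => (of fun a m => f m (y a)).det) x
      = ∑ m, -μ m * ∑ i, A i m * adjugate A m i := by
        simp only [lap, slice, second, mul_sum]
        rw [sum_comm]
        exact sum_congr rfl fun m _ => sum_congr rfl fun i _ => by ring
    _ = -(∑ m, μ m) * A.det := by
        simp only [← det_eq_sum_mul_adjugate_col, sum_mul, neg_mul, sum_neg_distrib]

theorem chebyshevU_eval_sin_mul_cos (n : ℕ) (t : ℝ) :
    (U ℝ n).eval (sin t) * cos t = sin ((n + 1) * (π / 2 - t)) := by
  simpa [cos_pi_div_two_sub, sin_pi_div_two_sub] using U_real_cos (π / 2 - t) n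

theorem det_sin_mul_pi_div_two_sub {k : ℕ} (y : Fin k → ℝ) :
    (of fun a (m : Fin k) => sin (((m : ℕ) + 1) * (π / 2 - y a))).det
      = (∏ m : Fin k, (2 : ℝ) ^ (m : ℕ)) *
        ((∏ i : Fin k, ∏ j ∈ Ioi i, (sin (y j) - sin (y i))) * ∏ i, cos (y i)) := by
  have hU := det_eval_eq_det_vandermonde_mul_prod_leadingCoeff (fun a => sin (y a))
    (fun m : Fin k => U ℝ (m : ℕ)) fun m => natDegree_U_natCast ℝ m
  simp only [leadingCoeff_U_natCast] at hU
  calc (of fun a (m : Fin k) => sin (((m : ℕ) + 1) * (π / 2 - y a))).det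
      = (of fun a (m : Fin k) => cos (y a) * (U ℝ (m : ℕ)).eval (sin (y a))).det := by
        congr 1
        ext a m
        rw [of_apply, of_apply, ← chebyshevU_eval_sin_mul_cos, mul_comm]
    _ = (∏ a, cos (y a)) * (of fun a (m : Fin k) => (U ℝ (m : ℕ)).eval (sin (y a))).det :=
        det_mul_column _ _
    _ = _ := by
        rw [hU, det_vandermonde]
        ring

theorem hasDerivAt_sin_mul_pi_div_two_sub (ω t : ℝ) :
    HasDerivAt (fun s => sin (ω * (π / 2 - s))) (-(ω * cos (ω * (π / 2 - t)))) t :=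
  (((hasDerivAt_id' t).const_sub (π / 2)).const_mul ω).sin.congr_deriv (by ring)

theorem hasDerivAt_neg_mul_cos_mul_pi_div_two_sub (ω t : ℝ) :
    HasDerivAt (fun s => -(ω * cos (ω * (π / 2 - s)))) (-ω ^ 2 * sin (ω * (π / 2 - t))) t :=
  ((((hasDerivAt_id' t).const_sub (π / 2)).const_mul ω).cos.const_mul ω).neg.congr_deriv
    (by ring)

theorem reduite_sine_eigenfunction_general (k : ℕ) (x : Fin k → ℝ) :
    -(1 / 2 : ℝ) *
        lap (fun y => (∏ i : Fin k, ∏ j ∈ Finset.Ioi i,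
            (Real.sin (y j) - Real.sin (y i))) * ∏ i : Fin k, Real.cos (y i)) x =
      ((1 / 2 : ℝ) * ∑ i : Fin k, (((i : ℕ) + 1 : ℝ)) ^ 2) *
        ((∏ i : Fin k, ∏ j ∈ Finset.Ioi i, (Real.sin (x j) - Real.sin (x i))) *
          ∏ i : Fin k, Real.cos (x i)) := by
  set c : ℝ := ∏ m : Fin k, (2 : ℝ) ^ (m : ℕ)
  have hc : c ≠ 0 := by positivity
  have hF : (fun y : Fin k → ℝ => (∏ i : Fin k, ∏ j ∈ Ioi i, (sin (y j) - sin (y i))) *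
      ∏ i, cos (y i))
      = fun y => c⁻¹ * (of fun a (m : Fin k) => sin (((m : ℕ) + 1) * (π / 2 - y a))).det := by
    funext y
    rw [det_sin_mul_pi_div_two_sub, inv_mul_cancel_left₀ hc]
  have hlap := lap_det_of_hasDerivAt
    (fun (m : Fin k) t => sin (((m : ℕ) + 1) * (π / 2 - t)))
    (fun m t => -(((m : ℕ) + 1) * cos (((m : ℕ) + 1) * (π / 2 - t))))
    (fun m => ((m : ℕ) + 1) ^ 2) (fun m t => hasDerivAt_sin_mul_pi_div_two_sub _ t)
    (fun m t => hasDerivAt_neg_mul_cos_mul_pi_div_two_sub _ t) x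
  rw [hF, lap_const_mul, hlap, det_sin_mul_pi_div_two_sub]
  field_simp
  ring

/-- `h_A(sin x) ∏_i cos x_i` is an eigenfunction: `-½Δ` applied to it equals
`(½ Σ_{i=1}^k i²)` times it, on `W_A ∩ (-π/2, π/2)^k`. -/
theorem reduite_sine_eigenfunction (k : ℕ) (x : Fin k → ℝ)
    (hxW : ∀ i j : Fin k, i < j → x i < x j)
    (hxI : ∀ i, x i ∈ Set.Ioo (-(Real.pi / 2)) (Real.pi / 2)) :
    -(1 / 2 : ℝ) *
        lap (fun y => (∏ i : Fin k, ∏ j ∈ Finset.Ioi i,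
            (Real.sin (y j) - Real.sin (y i))) * ∏ i : Fin k, Real.cos (y i)) x =
      ((1 / 2 : ℝ) * ∑ i : Fin k, (((i : ℕ) + 1 : ℝ)) ^ 2) *
        ((∏ i : Fin k, ∏ j ∈ Finset.Ioi i, (Real.sin (x j) - Real.sin (x i))) *
          ∏ i : Fin k, Real.cos (x i)) :=
  reduite_sine_eigenfunction_general k x
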